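/- Transposed (DIF, multiply-after-butterfly) factorization: for α = (n_K,…,n_0), N = ∏ n_k, F_N = S_α^{-1} (∏_{k=0}^K D̂_{k,α}), where D̂_{k,α} = A_k^{-1} Ŵ_k (I_{N/n_k} ⊗ F_{n_k}) A_k, with A_k = I_{N/N_k} ⊗ L^{N_k}_{n_k}, Ŵ_k = I_{N/N_k} ⊗ W^{N_k}_{n_k}, N_k = ∏_{j=0}^k n_j, and the product over k ordered with D̂_{0,α} leftmost (i.e., the reverse order of the DIT product). -/

import Mathlib

open Matrix Complex

/-- The primitive `n`-th root of unity `ω_n = exp(-2πi/n)`. -/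
noncomputable def tw (n : ℕ) : ℂ := Complex.exp (-(2 * Real.pi * Complex.I) / n)

/-- The `n × n` DFT matrix `F_n = [ω_n^{kl}]`. -/
noncomputable def DFT (n : ℕ) : Matrix (Fin n) (Fin n) ℂ :=
  fun r c => tw n ^ (r.val * c.val)

/-- The stride permutation `L^n_k` (with `n = k*m`), sending the basis vector
`e_{i,k} ⊗ e_{j,m}` (flat index `i*m+j`) to `e_{j,m} ⊗ e_{i,k}` (flat index `j*k+i`). -/
noncomputable def Lmat (n k m : ℕ) : Matrix (Fin n) (Fin n) ℂ :=
  fun r c => if r.val = (c.val % m) * k + c.val / m then 1 else 0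

/-- The diagonal twiddle matrix `W^n_m` (with `n = k*m`), acting on
`e_{i,k} ⊗ e_{j,m}` (flat index `c = i*m+j`) by the scalar `ω_n^{ij}`. -/
noncomputable def Wmat (n m : ℕ) : Matrix (Fin n) (Fin n) ℂ :=
  fun r c => if r = c then tw n ^ ((c.val / m) * (c.val % m)) else 0

/-- Entry of a `k × k` matrix at natural-number indices (0 outside range). -/
noncomputable def ment {k : ℕ} (A : Matrix (Fin k) (Fin k) ℂ) (i j : ℕ) : ℂ :=
  if h : i < k ∧ j < k then A ⟨i, h.1⟩ ⟨j, h.2⟩ else 0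

/-- Kronecker product `A ⊗ B` of a `k×k` and an `m×m` matrix, written on flat
indices of size `n = k*m` (row-major: index `i*m+j ↔ e_{i,k} ⊗ e_{j,m}`). -/
noncomputable def kron (n k m : ℕ) (A : Matrix (Fin k) (Fin k) ℂ)
    (B : Matrix (Fin m) (Fin m) ℂ) : Matrix (Fin n) (Fin n) ℂ :=
  fun r c => ment A (r.val / m) (c.val / m) * ment B (r.val % m) (c.val % m)

/-- Value of a digit list `[d_0, d_1, …]` in the mixed-radix system with radices
`[c_0, c_1, …]` (least-significant first): `d_0 + c_0*(d_1 + c_1*(…))`. -/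
def mval : List ℕ → List ℕ → ℕ
  | c :: cs, d :: ds => d + c * mval cs ds
  | _, _ => 0

/-- Digits (least-significant first) of `x` in the mixed-radix system with
radices `[c_0, c_1, …]` (least-significant first). -/
def mdig : List ℕ → ℕ → List ℕ
  | [], _ => []
  | c :: cs, x => x % c :: mdig cs (x / c)

/-- The digit-reversal permutation `P_α` of a multi-index `α = (n_K, …, n_0)`,
where `a = [n_0, …, n_K]` lists the radices of the system generated by `α`
least-significant first: `x` is decomposed in the system generated by
`α* = (n_0, …, n_K)` and re-read with reversed digits in the system of `α`. -/
def mrev (a : List ℕ) (x : ℕ) : ℕ := mval a ((mdig a.reverse x).reverse)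

/-- The digit-reversal permutation matrix `S_α`, `S_α e_x = e_{P_α x}`;
`a = [n_0, …, n_K]` lists `α = (n_K, …, n_0)` least-significant first. -/
noncomputable def Smat (n : ℕ) (a : List ℕ) : Matrix (Fin n) (Fin n) ℂ :=
  fun r c => if r.val = mrev a c.val then 1 else 0

/-- The diagonal matrix `V_{k,m,n}` of size `N = k*m*n`, acting on
`e_{i,k} ⊗ e_{j,m} ⊗ e_{ℓ,n}` (flat index `i*(m*n) + j*n + ℓ`) by
`ω_{kmn}^{i(ℓ m + j)}`. -/
noncomputable def Vmat (N k m n : ℕ) : Matrix (Fin N) (Fin N) ℂ :=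
  fun r c => if r = c then
    tw (k * m * n) ^ ((c.val / (m * n)) * ((c.val % n) * m + (c.val / n) % m)) else 0

/-!
Induction on the radix list, splitting off the most significant radix: `a = b ++ [n]`,
`M = ∏ b`, `N = M n`. Digit reversal factors as `S_a = (I_n ⊗ S_b) L^N_M`, and one
Cooley–Tukey step gives `L^N_M F_N = (I_n ⊗ F_M) · L^N_M W^N_n (I_M ⊗ F_n) L^N_n`, whose
second factor is the last stage `D̂_K` of `a`. The earlier stages of `a` are `I_n ⊗ D̂_k` for the
stages `D̂_k` of `b`, since `I_{N/q} ⊗ X = I_n ⊗ (I_{M/q} ⊗ X)` whenever `q ∣ M`. Hence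
`S_a F_N = (I_n ⊗ S_b F_M) D̂_K`, and the induction hypothesis `S_b F_M = ∏ D̂_k` applies.
Finally `S_a` is invertible, being a product of permutation matrices.
-/

open Kronecker

lemma mul_add_lt_mul {a b p q : ℕ} (ha : a < p) (hb : b < q) : a * q + b < p * q := by
  nlinarith

lemma mul_add_div_of_lt {a b c : ℕ} (hc : c < b) : (a * b + c) / b = a := by
  rw [add_comm, Nat.add_mul_div_right _ _ (Nat.zero_lt_of_lt hc), Nat.div_eq_of_lt hc, zero_add]

lemma Fin.val_div_lt {N p q : ℕ} (h : N = p * q) (r : Fin N) : r.val / q < p :=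
  Nat.div_lt_of_lt_mul (by rw [mul_comm]; exact lt_of_lt_of_eq r.isLt h)

lemma Fin.val_div_mul_add_lt {N p q : ℕ} (h : N = p * q) (r : Fin N) (j : Fin q) :
    r.val / q * q + j < N :=
  lt_of_lt_of_eq (mul_add_lt_mul (r.val_div_lt h) j.isLt) h.symm

lemma Fin.sum_ite_val_eq {n v : ℕ} (hv : v < n) (f : Fin n → ℂ) :
    (∑ i : Fin n, if i.val = v then f i else 0) = f ⟨v, hv⟩ := by
  rw [← Fintype.sum_ite_eq' ⟨v, hv⟩ f]
  simp only [Fin.ext_iff]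

lemma tw_mul_pow (k : ℕ) {m : ℕ} (hm : m ≠ 0) : tw (k * m) ^ m = tw k := by
  rw [tw, tw, ← Complex.exp_nat_mul]
  congr 1
  have hm' : (m : ℂ) ≠ 0 := Nat.cast_ne_zero.2 hm
  push_cast
  field_simp

lemma tw_pow_self (n : ℕ) : tw n ^ n = 1 := by
  rcases Nat.eq_zero_or_pos n with rfl | hn
  · rw [pow_zero]
  · have h := tw_mul_pow 1 hn.ne'
    rw [one_mul] at h
    rw [h, tw]
    simp [Complex.exp_neg]

lemma tw_pow_cooley_tukey {M n : ℕ} (hM : M ≠ 0) (hn : n ≠ 0) (i₁ i₂ j₁ j₂ : ℕ) :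
    tw (M * n) ^ ((i₁ * n + i₂) * (j₁ * M + j₂)) =
      tw M ^ (i₁ * j₂) * tw (M * n) ^ (j₂ * i₂) * tw n ^ (i₂ * j₁) := by
  have hexp : (i₁ * n + i₂) * (j₁ * M + j₂) =
      (M * n) * (i₁ * j₁) + n * (i₁ * j₂) + j₂ * i₂ + M * (i₂ * j₁) := by ring
  have h_full : tw (M * n) ^ ((M * n) * (i₁ * j₁)) = 1 := by rw [pow_mul, tw_pow_self, one_pow]
  have h_M : tw (M * n) ^ (n * (i₁ * j₂)) = tw M ^ (i₁ * j₂) := by rw [pow_mul, tw_mul_pow M hn]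
  have h_n : tw (M * n) ^ (M * (i₂ * j₁)) = tw n ^ (i₂ * j₁) := by
    rw [pow_mul, mul_comm M n, tw_mul_pow n hM]
  rw [hexp, pow_add, pow_add, pow_add, h_full, h_M, h_n, one_mul]

lemma MonoidHom.map_nonsing_inv {m n α : Type*} [Fintype m] [DecidableEq m] [Fintype n]
    [DecidableEq n] [CommRing α] (f : Matrix m m α →* Matrix n n α) {A : Matrix m m α}
    (hA : IsUnit A) : f A⁻¹ = (f A)⁻¹ :=
  (inv_eq_right_inv (by rw [← map_mul, mul_nonsing_inv _ ((isUnit_iff_isUnit_det A).mp hA),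
    map_one])).symm

section Kron

variable {N p q : ℕ}

lemma ment_one {i j : ℕ} (hi : i < p) (hj : j < p) :
    ment (1 : Matrix (Fin p) (Fin p) ℂ) i j = if i = j then 1 else 0 := by
  simp [ment, hi, hj, Matrix.one_apply, Fin.ext_iff]

lemma ment_eq {k i j : ℕ} (A : Matrix (Fin k) (Fin k) ℂ) (hi : i < k) (hj : j < k) :
    ment A i j = A ⟨i, hi⟩ ⟨j, hj⟩ :=
  dif_pos ⟨hi, hj⟩

lemma kron_eq_reindex (h : N = p * q) (A : Matrix (Fin p) (Fin p) ℂ)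
    (B : Matrix (Fin q) (Fin q) ℂ) :
    kron N p q A B =
      reindex (finProdFinEquiv.trans (finCongr h.symm))
        (finProdFinEquiv.trans (finCongr h.symm)) (A ⊗ₖ B) := by
  subst h
  ext r c
  have hq : 0 < q := Nat.pos_of_mul_pos_left (Fin.pos r)
  simp [kron, ment, Fin.divNat, Fin.modNat, Nat.mod_lt _ hq, r.val_div_lt rfl, c.val_div_lt rfl]

lemma kron_mul_kron (h : N = p * q) (A A' : Matrix (Fin p) (Fin p) ℂ)
    (B B' : Matrix (Fin q) (Fin q) ℂ) :
    kron N p q A B * kron N p q A' B' = kron N p q (A * A') (B * B') := by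
  simp only [kron_eq_reindex h, reindex_apply, submatrix_mul_equiv, mul_kronecker_mul]

lemma kron_one_one (h : N = p * q) : kron N p q 1 1 = 1 := by
  rw [kron_eq_reindex h, one_kronecker_one, reindex_apply, submatrix_one_equiv]

noncomputable def kronOneLeft (h : N = p * q) :
    Matrix (Fin q) (Fin q) ℂ →* Matrix (Fin N) (Fin N) ℂ where
  toFun := kron N p q 1
  map_one' := kron_one_one h
  map_mul' A B := by rw [kron_mul_kron h, one_mul]

lemma kronOneLeft_apply (h : N = p * q) (B : Matrix (Fin q) (Fin q) ℂ) :
    kronOneLeft h B = kron N p q 1 B := rfl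

lemma kron_one_apply (h : N = p * q) (B : Matrix (Fin q) (Fin q) ℂ) (r c : Fin N) :
    kron N p q 1 B r c =
      if r.val / q = c.val / q then ment B (r.val % q) (c.val % q) else 0 := by
  rw [kron, ment_one (r.val_div_lt h) (c.val_div_lt h)]
  split_ifs <;> simp

lemma kron_one_mul_apply (h : N = p * q) (B : Matrix (Fin q) (Fin q) ℂ)
    (X : Matrix (Fin N) (Fin N) ℂ) (r c : Fin N) :
    (kron N p q 1 B * X) r c =
      ∑ j : Fin q, ment B (r.val % q) j * X ⟨r.val / q * q + j, r.val_div_mul_add_lt h j⟩ c := by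
  let e := finProdFinEquiv.trans (finCongr h.symm)
  have hq : 0 < q := Nat.pos_of_mul_pos_left (h ▸ Fin.pos r)
  calc (kron N p q 1 B * X) r c = ∑ y, kron N p q 1 B r y * X y c := mul_apply
    _ = ∑ ij : Fin p × Fin q, kron N p q 1 B r (e ij) * X (e ij) c := (e.sum_comp _).symm
    _ = ∑ i : Fin p, ∑ j : Fin q, kron N p q 1 B r (e (i, j)) * X (e (i, j)) c :=
      Fintype.sum_prod_type _
    _ = _ := by
      rw [Finset.sum_comm]
      refine Finset.sum_congr rfl fun j _ => ?_
      simp only [e, Equiv.trans_apply, finCongr_apply, kron_one_apply h, Fin.val_cast,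
        finProdFinEquiv_apply_val, Nat.add_mul_div_left _ _ hq, Nat.div_eq_of_lt j.isLt, zero_add,
        Nat.add_mul_mod_self_left, Nat.mod_eq_of_lt j.isLt, ite_mul, zero_mul,
        @eq_comm _ (r.val / q)]
      rw [Fin.sum_ite_val_eq (r.val_div_lt h)]
      congr 2
      ext
      simp only [Fin.val_cast, finProdFinEquiv_apply_val]
      ring

end Kron

lemma kron_single_block {N : ℕ} (X : Matrix (Fin N) (Fin N) ℂ) : kron N 1 N 1 X = X := by
  ext r c
  rw [kron_one_apply (one_mul N).symm, Nat.div_eq_of_lt r.isLt, Nat.div_eq_of_lt c.isLt,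
    if_pos rfl, Nat.mod_eq_of_lt r.isLt, Nat.mod_eq_of_lt c.isLt, ment_eq _ r.isLt c.isLt]

lemma kron_one_kron_one {M n q : ℕ} (hq : q ∣ M) (X : Matrix (Fin q) (Fin q) ℂ) :
    kron (M * n) (M * n / q) q 1 X = kron (M * n) n M 1 (kron M (M / q) q 1 X) := by
  obtain ⟨t, rfl⟩ := hq
  ext r c
  have hM0 : 0 < q * t := Nat.pos_of_mul_pos_right (Fin.pos r)
  have hq : 0 < q := Nat.pos_of_mul_pos_right hM0
  have hN : q * t * n = q * t * n / q * q := by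
    rw [mul_assoc, Nat.mul_div_cancel_left _ hq, mul_comm]
  have hM : q * t = q * t / q * q := by rw [Nat.mul_div_cancel_left _ hq, mul_comm]
  rw [kron_one_apply hN, kron_one_apply (mul_comm _ _),
    ment_eq _ (Nat.mod_lt _ hM0) (Nat.mod_lt _ hM0), kron_one_apply hM]
  simp only [Nat.mod_mod_of_dvd _ (dvd_mul_right q t), ← ite_and]
  simp only [← Nat.div_div_eq_div_mul, Nat.mod_mul_right_div_self, ← Nat.ext_div_mod_iff]

section Stride

variable {n k m : ℕ}

lemma stride_lt (h : n = k * m) (c : Fin n) : c.val % m * k + c.val / m < n := by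
  have hm : 0 < m := Nat.pos_of_mul_pos_left (h ▸ Fin.pos c)
  exact lt_of_lt_of_eq (mul_add_lt_mul (Nat.mod_lt _ hm) (c.val_div_lt h))
    (by rw [h, mul_comm])

lemma stride_stride {x : ℕ} (hx : x < k * m) :
    (x % m * k + x / m) % k * m + (x % m * k + x / m) / k = x := by
  have hk : x / m < k := Nat.div_lt_of_lt_mul (by rwa [mul_comm])
  rw [mul_add_div_of_lt hk, Nat.mul_add_mod_of_lt hk, Nat.div_add_mod']

lemma Lmat_apply_comm (h : n = k * m) (r c : Fin n) : Lmat n k m r c = Lmat n m k c r := by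
  have hr : r.val < m * k := lt_of_lt_of_eq r.isLt (h.trans (mul_comm k m))
  have hc : c.val < k * m := lt_of_lt_of_eq c.isLt h
  simp only [Lmat]
  congr 1
  exact propext ⟨fun hrc => by rw [hrc, stride_stride hc], fun hcr => by rw [hcr, stride_stride hr]⟩

lemma mul_Lmat_apply (h : n = k * m) (X : Matrix (Fin n) (Fin n) ℂ) (r c : Fin n) :
    (X * Lmat n k m) r c = X r ⟨c.val % m * k + c.val / m, stride_lt h c⟩ := by
  simp only [mul_apply, Lmat, mul_ite, mul_one, mul_zero]
  exact Fin.sum_ite_val_eq _ _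

lemma Lmat_mul_apply (h : n = k * m) (X : Matrix (Fin n) (Fin n) ℂ) (r c : Fin n) :
    (Lmat n k m * X) r c =
      X ⟨r.val % k * m + r.val / k, stride_lt (h.trans (mul_comm k m)) r⟩ c := by
  simp only [mul_apply, Lmat_apply_comm h r]
  simp only [Lmat, ite_mul, one_mul, zero_mul]
  exact Fin.sum_ite_val_eq _ _

lemma Lmat_mul_Lmat (h : n = k * m) : Lmat n k m * Lmat n m k = 1 := by
  ext r c
  rw [mul_Lmat_apply (h.trans (mul_comm k m)), Lmat, one_apply]
  simp only [stride_stride (lt_of_lt_of_eq c.isLt (h.trans (mul_comm k m))), Fin.ext_iff]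

lemma Lmat_inv (h : n = k * m) : (Lmat n k m)⁻¹ = Lmat n m k :=
  inv_eq_right_inv (Lmat_mul_Lmat h)

lemma isUnit_Lmat (h : n = k * m) : IsUnit (Lmat n k m) :=
  ⟨⟨_, _, Lmat_mul_Lmat h, Lmat_mul_Lmat (h.trans (mul_comm k m))⟩, rfl⟩

end Stride

lemma Wmat_eq_diagonal (N m : ℕ) :
    Wmat N m = diagonal fun c : Fin N => tw N ^ (c.val / m * (c.val % m)) := by
  ext r c
  simp only [Wmat, diagonal_apply]
  split_ifs with h <;> simp [h]

lemma Lmat_mul_DFT {M n : ℕ} (hM : M ≠ 0) (hn : n ≠ 0) :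
    Lmat (M * n) M n * DFT (M * n) =
      kron (M * n) n M 1 (DFT M) *
        (Lmat (M * n) M n * Wmat (M * n) n * kron (M * n) M n 1 (DFT n) * Lmat (M * n) n M) := by
  ext r c
  have hrM : r.val % M < M := Nat.mod_lt _ (Nat.pos_of_ne_zero hM)
  have hcM : c.val % M < M := Nat.mod_lt _ (Nat.pos_of_ne_zero hM)
  have hrn : r.val / M < n := r.val_div_lt (mul_comm M n)
  have hcn : c.val / M < n := c.val_div_lt (mul_comm M n)
  simp only [Matrix.mul_assoc]
  rw [Lmat_mul_apply rfl, kron_one_mul_apply (mul_comm M n)]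
  have summand : ∀ j : Fin M, ment (DFT M) (r.val % M) j *
      (Lmat (M * n) M n * (Wmat (M * n) n * (kron (M * n) M n 1 (DFT n) * Lmat (M * n) n M)))
        ⟨r.val / M * M + j, r.val_div_mul_add_lt (mul_comm M n) j⟩ c =
      if j.val = c.val % M then
        tw M ^ (r.val % M * (c.val % M)) * tw (M * n) ^ (c.val % M * (r.val / M)) *
          tw n ^ (r.val / M * (c.val / M))
      else 0 := by
    intro j
    rw [Lmat_mul_apply rfl, Wmat_eq_diagonal, diagonal_mul, mul_Lmat_apply (mul_comm M n),
      kron_one_apply rfl]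
    simp only [Nat.mul_add_mod_of_lt j.isLt, mul_add_div_of_lt j.isLt, mul_add_div_of_lt hrn,
      Nat.mul_add_mod_of_lt hrn, mul_add_div_of_lt hcn, Nat.mul_add_mod_of_lt hcn,
      ment_eq (DFT M) hrM j.isLt, ment_eq (DFT n) hrn hcn]
    split_ifs with hj
    · simp only [DFT, hj]
      ring
    · rw [mul_zero, mul_zero]
  rw [Finset.sum_congr rfl fun j _ => summand j, Fin.sum_ite_val_eq hcM, DFT,
    ← tw_pow_cooley_tukey hM hn, Nat.div_add_mod']

lemma mdig_length (cs : List ℕ) (x : ℕ) : (mdig cs x).length = cs.length := by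
  induction cs generalizing x with
  | nil => rfl
  | cons c cs ih => simp [mdig, ih]

lemma mval_append (b ds : List ℕ) (hlen : ds.length = b.length) (n e : ℕ) :
    mval (b ++ [n]) (ds ++ [e]) = mval b ds + b.prod * e := by
  induction b generalizing ds with
  | nil => simp_all [mval]
  | cons c cs ih =>
    obtain ⟨d, ds, rfl⟩ := List.exists_cons_of_length_eq_add_one hlen
    simp only [List.length_cons, Nat.add_right_cancel_iff] at hlen
    simp only [List.cons_append, mval, ih ds hlen, List.prod_cons]
    ring

lemma mrev_append (b : List ℕ) (n x : ℕ) :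
    mrev (b ++ [n]) x = mrev b (x / n) + b.prod * (x % n) := by
  rw [mrev, List.reverse_append, List.reverse_singleton, List.singleton_append, mdig,
    List.reverse_cons, mval_append _ _ (by simp [mdig_length]), mrev]

lemma mrev_lt {b : List ℕ} (hb : ∀ x ∈ b, 0 < x) (x : ℕ) : mrev b x < b.prod := by
  induction b using List.reverseRecOn generalizing x with
  | nil => exact Nat.one_pos
  | append_singleton b n ih =>
    have hn : 0 < n := hb n (by simp)
    rw [mrev_append, List.prod_append, List.prod_singleton, add_comm, mul_comm, mul_comm b.prod]
    exact mul_add_lt_mul (Nat.mod_lt x hn) (ih (fun y hy => hb y (by simp [hy])) (x / n))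

lemma Smat_nil : Smat 1 [] = 1 := by
  ext r c
  rw [Subsingleton.elim r c]
  simp [Smat, mrev, mval]

lemma Smat_append {b : List ℕ} (hb : ∀ x ∈ b, 0 < x) (n : ℕ) :
    Smat (b.prod * n) (b ++ [n]) =
      kron (b.prod * n) n b.prod 1 (Smat b.prod b) * Lmat (b.prod * n) b.prod n := by
  ext r c
  have hM : 0 < b.prod := List.prod_pos hb
  have hcn : c.val / n < b.prod := c.val_div_lt rfl
  rw [mul_Lmat_apply rfl, kron_one_apply (mul_comm _ _)]
  simp only [mul_add_div_of_lt hcn, Nat.mul_add_mod_of_lt hcn,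
    ment_eq _ (Nat.mod_lt _ hM) hcn, Smat, mrev_append, ← ite_and]
  simp only [Nat.div_mod_unique hM, mrev_lt hb, and_true, @eq_comm _ r.val]

lemma isUnit_Smat {a : List ℕ} (ha : ∀ x ∈ a, 0 < x) : IsUnit (Smat a.prod a) := by
  induction a using List.reverseRecOn with
  | nil => exact Smat_nil ▸ isUnit_one
  | append_singleton b n ih =>
    have hb : ∀ x ∈ b, 0 < x := fun x hx => ha x (List.mem_append_left _ hx)
    rw [List.prod_append, List.prod_singleton, Smat_append hb]
    exact ((ih hb).map (kronOneLeft (mul_comm _ _))).mul (isUnit_Lmat rfl)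

/-- The stage `D̂_{k,α}` of the factorization, `α` being read from `a` least-significant first. -/
noncomputable def difStage (N : ℕ) (a : List ℕ) (k : ℕ) : Matrix (Fin N) (Fin N) ℂ :=
  let nk := a.getD k 1
  let Nk := (a.take (k + 1)).prod
  let A := kron N (N / Nk) Nk 1 (Lmat Nk nk (Nk / nk))
  let W := kron N (N / Nk) Nk 1 (Wmat Nk nk)
  A⁻¹ * W * kron N (N / nk) nk 1 (DFT nk) * A

lemma difStage_append_of_lt {b : List ℕ} (n : ℕ) {k : ℕ} (hk : k < b.length) :
    difStage (b.prod * n) (b ++ [n]) k = kron (b.prod * n) n b.prod 1 (difStage b.prod b k) := by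
  have hnk : b.getD k 1 ∣ (b.take (k + 1)).prod := by
    rw [List.prod_take_succ _ _ hk, List.getD_eq_getElem _ _ hk]
    exact dvd_mul_left _ _
  have hNk : (b.take (k + 1)).prod ∣ b.prod :=
    ⟨(b.drop (k + 1)).prod, (List.prod_take_mul_prod_drop b (k + 1)).symm⟩
  have hA : IsUnit (kron b.prod (b.prod / (b.take (k + 1)).prod) (b.take (k + 1)).prod 1
      (Lmat (b.take (k + 1)).prod (b.getD k 1) ((b.take (k + 1)).prod / b.getD k 1))) :=
    (isUnit_Lmat (Nat.mul_div_cancel' hnk).symm).map (kronOneLeft (Nat.div_mul_cancel hNk).symm)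
  dsimp only [difStage]
  rw [List.getD_append _ _ _ _ hk, List.take_append_of_le_length (Nat.succ_le_of_lt hk),
    kron_one_kron_one hNk, kron_one_kron_one hNk, kron_one_kron_one (hnk.trans hNk)]
  simp only [← kronOneLeft_apply (mul_comm b.prod n), ← MonoidHom.map_nonsing_inv _ hA, ← map_mul]

lemma difStage_append_length {b : List ℕ} (hb : ∀ x ∈ b, 0 < x) {n : ℕ} (hn : 0 < n) :
    difStage (b.prod * n) (b ++ [n]) b.length =
      Lmat (b.prod * n) b.prod n * Wmat (b.prod * n) n * kron (b.prod * n) b.prod n 1 (DFT n) *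
        Lmat (b.prod * n) n b.prod := by
  have hM : 0 < b.prod := List.prod_pos hb
  dsimp only [difStage]
  rw [List.getD_append_right _ _ _ _ le_rfl, Nat.sub_self,
    List.take_of_length_le (by simp : (b ++ [n]).length ≤ b.length + 1), List.prod_append,
    List.prod_singleton, List.getD_cons_zero, Nat.div_self (Nat.mul_pos hM hn),
    Nat.mul_div_cancel _ hn,
    kron_single_block, kron_single_block, Lmat_inv (mul_comm b.prod n)]

lemma DFT_one : DFT 1 = 1 := by
  ext r c
  rw [Subsingleton.elim r c]
  simp [DFT]

theorem Smat_mul_DFT {a : List ℕ} (ha : ∀ x ∈ a, 0 < x) :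
    Smat a.prod a * DFT a.prod = ((List.range a.length).map (difStage a.prod a)).prod := by
  induction a using List.reverseRecOn with
  | nil => rw [List.prod_nil, Smat_nil, DFT_one, one_mul]; rfl
  | append_singleton b n ih =>
    have hb : ∀ x ∈ b, 0 < x := fun x hx => ha x (List.mem_append_left _ hx)
    have hn : 0 < n := ha n (by simp)
    have hM : 0 < b.prod := List.prod_pos hb
    have h : b.prod * n = n * b.prod := mul_comm _ _
    have lift : ((List.range b.length).map fun k =>
        kron (b.prod * n) n b.prod 1 (difStage b.prod b k)).prod =
        kron (b.prod * n) n b.prod 1 ((List.range b.length).map (difStage b.prod b)).prod := by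
      rw [← kronOneLeft_apply h, map_list_prod, List.map_map]
      rfl
    rw [List.prod_append, List.prod_singleton, List.length_append, List.length_singleton,
      List.range_succ, List.map_append, List.prod_append, List.map_singleton, List.prod_singleton,
      difStage_append_length hb hn,
      List.map_congr_left fun k hk => difStage_append_of_lt n (List.mem_range.1 hk), lift,
      ← ih hb, Smat_append hb, Matrix.mul_assoc, Lmat_mul_DFT hM.ne' hn.ne', ← Matrix.mul_assoc,
      kron_mul_kron h, one_mul]

theorem fft_dit_transposed_general (a : List ℕ) (ha : ∀ x ∈ a, 0 < x)
    (N : ℕ) (hN : N = a.prod) :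
    DFT N =
      (Smat N a)⁻¹ *
      (((List.range a.length).map (fun k =>
        let nk := a.getD k 1
        let Nk := (a.take (k + 1)).prod
        let A := kron N (N / Nk) Nk 1 (Lmat Nk nk (Nk / nk))
        let W := kron N (N / Nk) Nk 1 (Wmat Nk nk)
        A⁻¹ * W * kron N (N / nk) nk 1 (DFT nk) * A)).prod) := by
  subst hN
  have hS : IsUnit (Smat a.prod a).det := (isUnit_iff_isUnit_det _).mp (isUnit_Smat ha)
  calc DFT a.prod = (Smat a.prod a)⁻¹ * (Smat a.prod a * DFT a.prod) :=
        (nonsing_inv_mul_cancel_left _ _ hS).symm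
    _ = _ := by rw [Smat_mul_DFT ha]; rfl

/-- transposed (DIF, multiply-after-butterfly) factorization.
For `α = (n_K,…,n_0)` (least-significant-first list `a = [n_0,…,n_K]`),
`F_N = S_α⁻¹ (∏_{k=0}^K D̂_{k,α})` with `D̂_{0,α}` leftmost, where
`D̂_{k,α} = A_k⁻¹ Ŵ_k (I_{N/n_k} ⊗ F_{n_k}) A_k`,
`A_k = I_{N/N_k} ⊗ L^{N_k}_{n_k}`, `Ŵ_k = I_{N/N_k} ⊗ W^{N_k}_{n_k}`,
`N_k = ∏_{j=0}^k n_j`. -/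
theorem fft_dit_transposed (a : List ℕ) (hne : a ≠ []) (ha : ∀ x ∈ a, 0 < x)
    (N : ℕ) (hN : N = a.prod) :
    DFT N =
      (Smat N a)⁻¹ *
      (((List.range a.length).map (fun k =>
        let nk := a.getD k 1
        let Nk := (a.take (k + 1)).prod
        let A := kron N (N / Nk) Nk 1 (Lmat Nk nk (Nk / nk))
        let W := kron N (N / Nk) Nk 1 (Wmat Nk nk)
        A⁻¹ * W * kron N (N / nk) nk 1 (DFT nk) * A)).prod) :=
  fft_dit_transposed_general a ha N hN
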